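/- arXiv:1908.09234 — 4 statements merged into one kernel-verified Lean document; each statement's English description precedes it below -/
import Mathlib

section
/- For m ≥ 3, the number of binary strings of length m that end in "100" and contain the substring "100" only in that final position equals F(m) - 1, where F is the Fibonacci sequence with F(0)=0, F(1)=1. -/
/-!
Call `a n` the number of strings of length `n` avoiding `100`, and `b n` the number of strings
`t` of length `n` such that `1t` avoids `100`. Splitting on the first letter gives
`a (n + 1) = a n + b n`, and since `11t` avoids `100` iff `1t` does while `10t` does iff
`t = 1t'` with `1t'` avoiding it, `b (n + 2) = b (n + 1) + b n`. Hence `b n = F (n + 2)` and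
`a n = F (n + 3) - 1`. Finally, a string of length `n + 3` whose only `100` is its suffix is
exactly an avoiding string of length `n` followed by `100`.
-/

theorem Nat.card_subtype_fin_cons {α : Type*} [Fintype α] {n : ℕ}
    (P : (Fin (n + 1) → α) → Prop) :
    Nat.card {s // P s} = ∑ a, Nat.card {t : Fin n → α // P (Fin.cons a t)} := by
  rw [← Nat.card_sigma,
    ← Nat.card_congr (Equiv.subtypeProdEquivSigmaSubtype fun a t => P (Fin.cons a t))]
  exact Nat.card_congr ((Fin.consEquiv fun _ => α).subtypeEquiv fun _ => Iff.rfl).symm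

theorem Nat.card_subtype_fin_append {α : Type*} {n k : ℕ} (P : (Fin n → α) → Prop)
    (u : Fin k → α) :
    Nat.card {s : Fin (n + k) → α //
      P (fun i => s (Fin.castAdd k i)) ∧ ∀ j, s (Fin.natAdd n j) = u j} =
      Nat.card {t // P t} :=
  Nat.card_congr
    { toFun s := ⟨fun i => s.1 (Fin.castAdd k i), s.2.1⟩
      invFun t := ⟨Fin.append t.1 u, by simpa using t.2⟩
      left_inv s := by
        ext1
        rw [← Fin.append_castAdd_natAdd (f := s.1)]
        simp [funext s.2.2]
      right_inv t := by simp }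

def Avoids100 {n : ℕ} (s : Fin n → Bool) : Prop :=
  ∀ i (h : i + 2 < n), ¬(s ⟨i, Nat.lt_of_add_right_lt h⟩ = true ∧
    s ⟨i + 1, Nat.lt_of_succ_lt h⟩ = false ∧ s ⟨i + 2, h⟩ = false)

lemma avoids100_of_le_two {n : ℕ} (hn : n ≤ 2) (s : Fin n → Bool) : Avoids100 s :=
  fun _ h => absurd h (by omega)

lemma avoids100_cons_iff {n : ℕ} (c : Bool) (t : Fin n → Bool) :
    Avoids100 (Fin.cons c t) ↔
      (∀ h : 1 < n, ¬(c = true ∧ t ⟨0, by omega⟩ = false ∧ t ⟨1, h⟩ = false)) ∧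
        Avoids100 t := by
  constructor
  · intro H
    refine ⟨fun h hc => ?_, fun i h hc => ?_⟩
    · exact H 0 (Nat.succ_lt_succ h) hc
    · exact H (i + 1) (by omega) hc
  · rintro ⟨H0, H⟩ (_ | i) h hc
    · exact H0 (by omega) hc
    · exact H i (by omega) hc

lemma avoids100_cons_false {n : ℕ} (t : Fin n → Bool) :
    Avoids100 (Fin.cons false t) ↔ Avoids100 t := by
  simp [avoids100_cons_iff]

lemma avoids100_cons_cons_true {n : ℕ} (c : Bool) (t : Fin n → Bool) :
    Avoids100 (Fin.cons c (Fin.cons true t)) ↔ Avoids100 (Fin.cons true t) := by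
  simp [avoids100_cons_iff]

lemma avoids100_cons_true_cons_false {n : ℕ} (t : Fin (n + 1) → Bool) :
    Avoids100 (Fin.cons true (Fin.cons false t)) ↔ t 0 = true ∧ Avoids100 t := by
  simp [avoids100_cons_iff]

theorem card_avoids100_cons_true (n : ℕ) :
    Nat.card {t : Fin n → Bool // Avoids100 (Fin.cons true t)} = Nat.fib (n + 2) := by
  induction n using Nat.twoStepInduction with
  | zero => simp [avoids100_of_le_two]
  | one => simp [avoids100_of_le_two, Nat.fib_add_two]
  | more n ih₀ ih₁ =>
    have hcard₁₀ :
        Nat.card {t : Fin (n + 1) → Bool // Avoids100 (Fin.cons true (Fin.cons false t))} =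
          Nat.card {t : Fin n → Bool // Avoids100 (Fin.cons true t)} := by
      simp [avoids100_cons_true_cons_false, Nat.card_subtype_fin_cons (n := n)]
    rw [Nat.card_subtype_fin_cons, Fintype.sum_bool]
    simp only [avoids100_cons_cons_true, hcard₁₀, ih₀, ih₁, Nat.fib_add_two]
    ring

theorem card_avoids100 (n : ℕ) :
    Nat.card {s : Fin n → Bool // Avoids100 s} + 1 = Nat.fib (n + 3) := by
  induction n with
  | zero => simp [avoids100_of_le_two, Nat.fib_add_two]
  | succ n ih =>
    rw [Nat.card_subtype_fin_cons, Fintype.sum_bool]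
    simp only [avoids100_cons_false, card_avoids100_cons_true]
    rw [show n + 1 + 3 = n + 2 + 2 from rfl, Nat.fib_add_two (n := n + 2), ← ih]
    ring

lemma ends_with_only_100_iff {n : ℕ} (s : Fin (n + 3) → Bool) :
    (s ⟨n, by omega⟩ = true ∧ s ⟨n + 1, by omega⟩ = false ∧ s ⟨n + 2, by omega⟩ = false ∧
      ∀ i : ℕ, ∀ h : i + 2 < n + 3, s ⟨i, by omega⟩ = true → s ⟨i + 1, by omega⟩ = false →
        s ⟨i + 2, h⟩ = false → i = n) ↔
      Avoids100 (fun i : Fin n => s (Fin.castAdd 3 i)) ∧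
        ∀ j, s (Fin.natAdd n j) = ![true, false, false] j := by
  constructor
  · rintro ⟨h₀, h₁, h₂, honly⟩
    refine ⟨fun i hi hc => ?_, fun j => ?_⟩
    · have := honly i (by omega) hc.1 hc.2.1 hc.2.2
      omega
    · fin_cases j
      exacts [h₀, h₁, h₂]
  · rintro ⟨havoid, hsuffix⟩
    have hsn : ∀ j (hj : j < n + 3), j = n → s ⟨j, hj⟩ = true := by
      rintro j hj rfl
      exact hsuffix 0
    refine ⟨hsuffix 0, hsuffix 1, hsuffix 2, fun i hi h₀ h₁ h₂ => ?_⟩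
    by_contra hne
    rcases (by omega : i + 2 < n ∨ i + 2 = n ∨ i + 1 = n) with hlt | hi2 | hi1
    · exact havoid i hlt ⟨h₀, h₁, h₂⟩
    · simp [hsn _ _ hi2] at h₂
    · simp [hsn _ _ hi1] at h₁

/-- For `m ≥ 3`, the number of binary strings of length `m` ending in "100" and
containing "100" only in that final position is `F m - 1`. -/
theorem count_end_100_only (m : ℕ) (hm : 3 ≤ m) :
    Nat.card {s : Fin m → Bool //
      s ⟨m - 3, by omega⟩ = true ∧ s ⟨m - 2, by omega⟩ = false ∧
      s ⟨m - 1, by omega⟩ = false ∧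
      ∀ i : ℕ, ∀ h : i + 2 < m,
        s ⟨i, by omega⟩ = true → s ⟨i + 1, by omega⟩ = false → s ⟨i + 2, h⟩ = false →
          i = m - 3} = Nat.fib m - 1 := by
  obtain ⟨n, rfl⟩ : ∃ n, m = n + 3 := ⟨m - 3, by omega⟩
  calc _ = Nat.card {s : Fin (n + 3) → Bool //
          Avoids100 (fun i : Fin n => s (Fin.castAdd 3 i)) ∧
            ∀ j, s (Fin.natAdd n j) = ![true, false, false] j} :=
        Nat.card_congr (Equiv.subtypeEquivRight ends_with_only_100_iff)
    _ = Nat.card {t : Fin n → Bool // Avoids100 t} := Nat.card_subtype_fin_append _ _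
    _ = Nat.fib (n + 3) - 1 := by have := card_avoids100 n; omega
end

section
/- The sum ∑_{m=3}^∞ m·(F(m)-1)/2^m equals 8, where F is the Fibonacci sequence with F(0)=0, F(1)=1; hence the expected number of fair-coin tosses until the pattern HTT first appears is 8. -/
/-!
By Binet's formula `F m = (φ^m - ψ^m)/√5`, the series `∑ m F(m) x^m` is a combination of two
series `∑ m r^m = r/(1 - r)²`, and sums to `x (1 + x²)/(1 - x - x²)²`; at `x = 1/2` this is `10`.
Subtracting `∑ m/2^m = 2` leaves `8`.
-/

open Real goldenRatio

theorem norm_goldenRatio_mul_lt_one {x : ℝ} (hx : |x| < φ⁻¹) : ‖φ * x‖ < 1 := by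
  rw [norm_mul, norm_of_nonneg goldenRatio_pos.le, norm_eq_abs]
  calc φ * |x| < φ * φ⁻¹ := by gcongr
    _ = 1 := mul_inv_cancel₀ goldenRatio_ne_zero

theorem norm_goldenConj_mul_lt_one {x : ℝ} (hx : |x| < φ⁻¹) : ‖ψ * x‖ < 1 := by
  have hφinv : φ⁻¹ < 1 := inv_lt_one_of_one_lt₀ one_lt_goldenRatio
  rw [norm_mul, norm_eq_abs, norm_eq_abs, abs_of_neg goldenConj_neg, ← inv_goldenRatio]
  calc φ⁻¹ * |x| ≤ 1 * |x| := by gcongr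
    _ < 1 := by linarith

theorem div_one_sub_mul_sq_sub_div_one_sub_mul_sq {K : Type*} [Field K] {a b x : K}
    (hab : a * b = -1) (ha : 1 - a * x ≠ 0) (hb : 1 - b * x ≠ 0) (hne : a - b ≠ 0) :
    (a * x / (1 - a * x) ^ 2 - b * x / (1 - b * x) ^ 2) / (a - b)
      = x * (1 + x ^ 2) / ((1 - a * x) * (1 - b * x)) ^ 2 := by
  rw [div_sub_div _ _ (pow_ne_zero 2 ha) (pow_ne_zero 2 hb), ← mul_pow, div_right_comm]
  congr 1
  rw [div_eq_iff hne]
  linear_combination (x ^ 3 * (b - a)) * hab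

theorem hasSum_nat_mul_fib_mul_pow {x : ℝ} (hx : |x| < φ⁻¹) :
    HasSum (fun m : ℕ => m * Nat.fib m * x ^ m) (x * (1 + x ^ 2) / (1 - x - x ^ 2) ^ 2) := by
  have hφ := norm_goldenRatio_mul_lt_one hx
  have hψ := norm_goldenConj_mul_lt_one hx
  have h1φ : 1 - φ * x ≠ 0 := by
    rw [norm_eq_abs, abs_lt] at hφ; linarith
  have h1ψ : 1 - ψ * x ≠ 0 := by
    rw [norm_eq_abs, abs_lt] at hψ; linarith
  have hprod : (1 - φ * x) * (1 - ψ * x) = 1 - x - x ^ 2 := by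
    linear_combination (-x) * goldenRatio_add_goldenConj + x ^ 2 * goldenRatio_mul_goldenConj
  have hterm (m : ℕ) : (m * (φ * x) ^ m - m * (ψ * x) ^ m) / √5 = m * Nat.fib m * x ^ m := by
    rw [coe_fib_eq, mul_pow, mul_pow]
    ring
  have hvalue : (φ * x / (1 - φ * x) ^ 2 - ψ * x / (1 - ψ * x) ^ 2) / √5
      = x * (1 + x ^ 2) / (1 - x - x ^ 2) ^ 2 := by
    rw [← hprod, ← goldenRatio_sub_goldenConj]
    refine div_one_sub_mul_sq_sub_div_one_sub_mul_sq goldenRatio_mul_goldenConj h1φ h1ψ ?_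
    rw [goldenRatio_sub_goldenConj]
    positivity
  simpa only [hterm, hvalue] using ((hasSum_coe_mul_geometric_of_norm_lt_one hφ).sub
    (hasSum_coe_mul_geometric_of_norm_lt_one hψ)).div_const √5

theorem cast_mul_fib_sub_one (m : ℕ) :
    ((m * (Nat.fib m - 1) : ℕ) : ℝ) = m * Nat.fib m - m := by
  rcases Nat.eq_zero_or_pos m with rfl | hm
  · simp
  · rw [Nat.cast_mul, Nat.cast_sub (Nat.fib_pos.2 hm), Nat.cast_one, mul_sub_one]

/-- `∑_{m≥3} m·(F m - 1)/2^m = 8`: the expected number of fair-coin tosses until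
the pattern HTT first appears is 8.  (The terms for `m ≤ 2` vanish.) -/
theorem expected_tosses_HTT :
    ∑' m : ℕ, ((m * (Nat.fib m - 1) : ℕ) : ℝ) / 2 ^ m = 8 := by
  have hhalf : |(1 / 2 : ℝ)| < φ⁻¹ := by
    rw [abs_of_pos one_half_pos, one_div]
    exact inv_strictAnti₀ goldenRatio_pos goldenRatio_lt_two
  have h := (hasSum_nat_mul_fib_mul_pow hhalf).sub
    (hasSum_coe_mul_geometric_of_norm_lt_one (r := (1 / 2 : ℝ)) (by norm_num))
  have hterm (m : ℕ) : ((m * (Nat.fib m - 1) : ℕ) : ℝ) / 2 ^ m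
      = m * Nat.fib m * (1 / 2) ^ m - m * (1 / 2) ^ m := by
    rw [cast_mul_fib_sub_one, one_div_pow]
    ring
  simp only [← hterm] at h
  rw [h.tsum_eq]
  norm_num
end

section
/- Let T be a fixed binary pattern of length m, σ_n the number of binary strings of length n avoiding T (σ_0 = 1), and τ_n as above. Then σ_n = 2^n · ∑_{j=n+1}^∞ τ_j / 2^j for all n ≥ 0. -/
/-- The pattern `t` (of length `m`) occurs in the string `s` (of length `n`)
at position `i`. -/
def occursAt {m n : ℕ} (t : Fin m → Bool) (s : Fin n → Bool) (i : ℕ) : Prop :=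
  ∃ h : i + m ≤ n, ∀ k : Fin m,
    s ⟨i + k, Nat.lt_of_lt_of_le (Nat.add_lt_add_left k.isLt i) h⟩ = t k

/-- `sigmaT t n` is the number of binary strings of length `n` avoiding the
pattern `t`. -/
noncomputable def sigmaT {m : ℕ} (t : Fin m → Bool) (n : ℕ) : ℕ :=
  Nat.card {s : Fin n → Bool // ∀ i : ℕ, ¬ occursAt t s i}

/-- `tauT t n` is the number of binary strings of length `n` whose final `m`
entries form the pattern `t` and which contain no other occurrence of `t`. -/
noncomputable def tauT {m : ℕ} (t : Fin m → Bool) (n : ℕ) : ℕ :=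
  Nat.card {s : Fin n → Bool //
    occursAt t s (n - m) ∧ ∀ i : ℕ, occursAt t s i → i = n - m}


/-!
Let `a k = σ_k / 2^k` be the fraction of strings of length `k` avoiding `T`. Extending an
avoiding string of length `k` by one bit gives either an avoiding string of length `k + 1` or one
in which `T` occurs only at the end, so `2 σ_k = σ_{k+1} + τ_{k+1}`, i.e.
`a k - a (k + 1) = τ_{k+1} / 2^{k+1}`. Hence `a` is antitone and the series telescopes to
`a n - lim a`. The limit is `0`: splitting an avoiding string of length `k + m` into its first
`k` bits and a final block `≠ T` gives `a (k + m) ≤ (1 - 2^{-m}) a k`.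
-/

open Filter Topology

theorem Antitone.tendsto_zero_of_add_le_mul {a : ℕ → ℝ} (ha : Antitone a) (h0 : ∀ k, 0 ≤ a k)
    {c : ℝ} (hc : c < 1) (p : ℕ) (h : ∀ k, a (k + p) ≤ c * a k) : Tendsto a atTop (𝓝 0) := by
  have hl := tendsto_atTop_ciInf ha ⟨0, Set.forall_mem_range.mpr h0⟩
  set l := ⨅ k, a k
  have hl0 : 0 ≤ l := ge_of_tendsto' hl h0
  have hlc : l ≤ c * l :=
    le_of_tendsto_of_tendsto' (hl.comp (tendsto_add_atTop_nat p)) (hl.const_mul c) h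
  rwa [show l = 0 by nlinarith] at hl

theorem Antitone.hasSum_sub_succ {a : ℕ → ℝ} (ha : Antitone a) {l : ℝ}
    (hl : Tendsto a atTop (𝓝 l)) : HasSum (fun j => a j - a (j + 1)) (a 0 - l) := by
  rw [hasSum_iff_tendsto_nat_of_nonneg fun j => sub_nonneg.mpr (ha j.le_succ)]
  simpa only [Finset.sum_range_sub'] using tendsto_const_nhds.sub hl

section PatternAvoidance

variable {m : ℕ} (t : Fin m → Bool)

def Avoids {n : ℕ} (s : Fin n → Bool) : Prop := ∀ i, ¬ occursAt t s i

def OccursOnlyAtEnd {n : ℕ} (s : Fin n → Bool) : Prop :=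
  occursAt t s (n - m) ∧ ∀ i, occursAt t s i → i = n - m

theorem sigmaT_eq_card_avoids (n : ℕ) :
    sigmaT t n = Nat.card {s : Fin n → Bool // Avoids t s} := rfl

theorem tauT_eq_card_occursOnlyAtEnd (n : ℕ) :
    tauT t n = Nat.card {s : Fin n → Bool // OccursOnlyAtEnd t s} := rfl

theorem occursAt_comp_castLE_iff {n n' : ℕ} (h : n ≤ n') (s : Fin n' → Bool) (i : ℕ) :
    occursAt t (s ∘ Fin.castLE h) i ↔ i + m ≤ n ∧ occursAt t s i :=
  ⟨fun ⟨hi, hs⟩ => ⟨hi, hi.trans h, hs⟩, fun ⟨hi, _, hs⟩ => ⟨hi, hs⟩⟩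

theorem avoids_init_iff {n : ℕ} (s : Fin (n + 1) → Bool) :
    Avoids t (Fin.init s) ↔ ∀ i, occursAt t s i → i = n + 1 - m := by
  refine forall_congr' fun i => ?_
  rw [show Fin.init s = s ∘ Fin.castLE n.le_succ from rfl, occursAt_comp_castLE_iff]
  constructor
  · intro h hs
    have hlen := hs.1
    have hlate : ¬ i + m ≤ n := fun hi => h ⟨hi, hs⟩
    omega
  · rintro h ⟨hi, hs⟩
    have hlen := hs.1
    have hend := h hs
    omega

theorem avoids_init_iff_or {n : ℕ} (s : Fin (n + 1) → Bool) :
    Avoids t (Fin.init s) ↔ Avoids t s ∨ OccursOnlyAtEnd t s := by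
  rw [avoids_init_iff]
  constructor
  · intro h
    by_cases hs : Avoids t s
    · exact .inl hs
    · obtain ⟨i, hi⟩ := not_forall_not.mp hs
      exact .inr ⟨h i hi ▸ hi, h⟩
  · rintro (hs | ⟨-, h⟩) i hi
    · exact absurd hi (hs i)
    · exact h i hi

theorem card_avoids_init (n : ℕ) :
    Nat.card {s : Fin (n + 1) → Bool // Avoids t (Fin.init s)} = 2 * sigmaT t n := by
  let e : {s : Fin (n + 1) → Bool // Avoids t (Fin.init s)} ≃
      {u : Fin n → Bool // Avoids t u} × Bool :=
    (((Fin.snocEquiv fun _ => Bool).symm.trans (Equiv.prodComm _ _)).subtypeEquiv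
      fun _ => Iff.rfl).trans Equiv.prodSubtypeFstEquivSubtypeProd
  rw [Nat.card_congr e, Nat.card_prod, Nat.card_eq_fintype_card (α := Bool), Fintype.card_bool,
    mul_comm, sigmaT_eq_card_avoids]

theorem two_mul_sigmaT (n : ℕ) : 2 * sigmaT t n = sigmaT t (n + 1) + tauT t (n + 1) := by
  classical
  have hdisj : Disjoint (Avoids t (n := n + 1)) (OccursOnlyAtEnd t) :=
    Pi.disjoint_iff.mpr fun s => Prop.disjoint_iff.mpr fun ⟨hs, hend, _⟩ => hs _ hend
  rw [← card_avoids_init, Nat.card_congr (Equiv.subtypeEquivRight (avoids_init_iff_or t)),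
    Nat.card_congr (subtypeOrEquiv _ _ hdisj), Nat.card_sum, sigmaT_eq_card_avoids,
    tauT_eq_card_occursOnlyAtEnd]

theorem sigmaT_add_le (n : ℕ) : sigmaT t (n + m) ≤ (2 ^ m - 1) * sigmaT t n := by
  classical
  let f : {s : Fin (n + m) → Bool // Avoids t s} →
      {u : Fin n → Bool // Avoids t u} × {v : Fin m → Bool // v ≠ t} := fun s =>
    (⟨s.1 ∘ Fin.castLE (n.le_add_right m), fun i hi =>
        s.2 i ((occursAt_comp_castLE_iff t _ _ _).mp hi).2⟩,
      ⟨fun k => s.1 (Fin.natAdd n k), fun hv => s.2 n ⟨le_rfl, congrFun hv⟩⟩)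
  have hf : f.Injective := fun s s' h => Subtype.ext <| (Fin.appendEquiv n m).symm.injective <|
    Prod.ext (congrArg (fun p => p.1.1) h) (congrArg (fun p => p.2.1) h)
  calc sigmaT t (n + m) ≤ _ := Nat.card_le_card_of_injective f hf
    _ = (2 ^ m - 1) * sigmaT t n := by
      rw [Nat.card_prod, Nat.card_eq_fintype_card (α := {v // v ≠ t}),
        Fintype.card_subtype_compl, Fintype.card_subtype_eq]
      simp [sigmaT_eq_card_avoids, mul_comm]

noncomputable def avoidingFraction (k : ℕ) : ℝ := sigmaT t k / 2 ^ k

theorem avoidingFraction_sub_succ (k : ℕ) :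
    avoidingFraction t k - avoidingFraction t (k + 1) = tauT t (k + 1) / 2 ^ (k + 1) := by
  have h : (2 * sigmaT t k : ℝ) = sigmaT t (k + 1) + tauT t (k + 1) := by
    exact_mod_cast two_mul_sigmaT t k
  rw [avoidingFraction, avoidingFraction, eq_div_iff (by positivity), sub_mul, pow_succ,
    div_mul_cancel₀ _ (by positivity), ← mul_assoc, div_mul_cancel₀ _ (by positivity)]
  linarith

theorem antitone_avoidingFraction : Antitone (avoidingFraction t) :=
  antitone_nat_of_succ_le fun k => sub_nonneg.mp <| by
    rw [avoidingFraction_sub_succ]; positivity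

theorem avoidingFraction_add_le (k : ℕ) :
    avoidingFraction t (k + m) ≤ ((2 ^ m - 1 : ℕ) / 2 ^ m : ℝ) * avoidingFraction t k := by
  rw [avoidingFraction, avoidingFraction, div_mul_div_comm, pow_add, mul_comm ((2 : ℝ) ^ k)]
  gcongr
  exact_mod_cast sigmaT_add_le t k

theorem tendsto_avoidingFraction_atTop : Tendsto (avoidingFraction t) atTop (𝓝 0) := by
  refine (antitone_avoidingFraction t).tendsto_zero_of_add_le_mul (fun k => by
    unfold avoidingFraction; positivity) ?_ m (avoidingFraction_add_le t)
  rw [div_lt_one (by positivity)]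
  exact_mod_cast Nat.sub_lt (Nat.two_pow_pos m) one_pos

end PatternAvoidance

theorem sigma_eq_tail_sum_general {m : ℕ} (t : Fin m → Bool) (n : ℕ) :
    (sigmaT t n : ℝ) = 2 ^ n * ∑' j : ℕ, (tauT t (n + 1 + j) : ℝ) / 2 ^ (n + 1 + j) := by
  have hanti : Antitone fun j => avoidingFraction t (j + n) :=
    (antitone_avoidingFraction t).comp_monotone fun _ _ h => Nat.add_le_add_right h n
  have hsum := hanti.hasSum_sub_succ
    ((tendsto_avoidingFraction_atTop t).comp (tendsto_add_atTop_nat n))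
  have hterm (j : ℕ) : avoidingFraction t (j + n) - avoidingFraction t (j + 1 + n) =
      tauT t (n + 1 + j) / 2 ^ (n + 1 + j) := by
    rw [show j + 1 + n = j + n + 1 by omega, avoidingFraction_sub_succ,
      show n + 1 + j = j + n + 1 by omega]
  simp only [hterm, zero_add, sub_zero] at hsum
  rw [hsum.tsum_eq, avoidingFraction, mul_div_cancel₀ _ (by positivity)]

/-- `σ_n = 2^n · ∑_{j = n+1}^∞ τ_j / 2^j` for all `n ≥ 0`. -/
theorem sigma_eq_tail_sum {m : ℕ} (hm : 0 < m) (t : Fin m → Bool) (n : ℕ) :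
    (sigmaT t n : ℝ) = 2 ^ n * ∑' j : ℕ, (tauT t (n + 1 + j) : ℝ) / 2 ^ (n + 1 + j) :=
  sigma_eq_tail_sum_general t n
end

section
/- For any binary pattern T of length m, the expected number of fair-coin tosses until T first appears equals ∑_{j=1}^m c_j·2^j, where c_j = 1 if the first j characters of T coincide with the last j characters of T (i.e., j indexes a self-overlap, a 'correlation' of T), and c_j = 0 otherwise; in particular c_m = 1. Consequently N_T is always an even integer and satisfies 2^m ≤ N_T ≤ 2^{m+1} − 2. -/
namespace ConwayAux

variable {m : ℕ}

instance occDec {n : ℕ} (t : Fin m → Bool) (s : Fin n → Bool) (i : ℕ) :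
    Decidable (occursAt t s i) :=
  if h : i + m ≤ n then
    decidable_of_iff
      (∀ k : Fin m, s ⟨i + k, Nat.lt_of_lt_of_le (Nat.add_lt_add_left k.isLt i) h⟩ = t k)
      ⟨fun H => ⟨h, H⟩, fun ⟨_, H⟩ => H⟩
  else isFalse fun ⟨h', _⟩ => h h'

theorem occursAt_le {n : ℕ} {t : Fin m → Bool} {s : Fin n → Bool} {i : ℕ}
    (h : occursAt t s i) : i + m ≤ n := h.1

theorem occursAt_apply {n : ℕ} {t : Fin m → Bool} {s : Fin n → Bool} {i : ℕ}
    (h : occursAt t s i) (k : Fin m) (hk : i + k < n) : s ⟨i + k, hk⟩ = t k := h.2 k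

theorem occursAt_intro {n : ℕ} {t : Fin m → Bool} {s : Fin n → Bool} {i : ℕ}
    (h : i + m ≤ n) (H : ∀ (k : Fin m) (hk : i + k < n), s ⟨i + k, hk⟩ = t k) :
    occursAt t s i := ⟨h, fun k => H k _⟩

theorem occursAt_castLE {n n' : ℕ} (h : n ≤ n') {t : Fin m → Bool} {s : Fin n' → Bool}
    {i : ℕ} :
    occursAt t (fun k => s (Fin.castLE h k)) i ↔ i + m ≤ n ∧ occursAt t s i := by
  constructor
  · rintro ⟨h1, H⟩
    exact ⟨h1, h1.trans h, fun k => H k⟩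
  · rintro ⟨h1, _, H⟩
    exact ⟨h1, fun k => H k⟩

instance avoidDec {n : ℕ} (t : Fin m → Bool) :
    DecidablePred (fun s : Fin n → Bool => ∀ i : ℕ, ¬ occursAt t s i) := fun s =>
  decidable_of_iff (∀ i < n + 1, ¬ occursAt t s i)
    ⟨fun H i hocc => by
        rcases Nat.lt_or_ge i (n + 1) with h | h
        · exact H i h hocc
        · have := hocc.1; omega,
      fun H i _ => H i⟩

instance tauPredDec {n : ℕ} (t : Fin m → Bool) (c : ℕ) :
    DecidablePred (fun s : Fin n → Bool => ∀ i : ℕ, occursAt t s i → i = c) := fun s =>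
  decidable_of_iff (∀ i < n + 1, occursAt t s i → i = c)
    ⟨fun H i hocc => by
        rcases Nat.lt_or_ge i (n + 1) with h | h
        · exact H i h hocc
        · have := hocc.1; omega,
      fun H i _ => H i⟩

theorem tauT_eq_zero (hm : 0 < m) (t : Fin m → Bool) {n : ℕ} (hn : n < m) :
    tauT t n = 0 := by
  rw [tauT]
  have : IsEmpty {s : Fin n → Bool //
      occursAt t s (n - m) ∧ ∀ i : ℕ, occursAt t s i → i = n - m} := by
    constructor
    rintro ⟨s, hs, -⟩
    have := hs.1
    omega
  exact Nat.card_of_isEmpty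

theorem sigmaT_zero (hm : 0 < m) (t : Fin m → Bool) : sigmaT t 0 = 1 := by
  rw [sigmaT]
  rw [Nat.card_congr (Equiv.subtypeUnivEquiv (fun s => by
    intro i hocc
    have := hocc.1
    omega))]
  simp [Nat.card_eq_fintype_card]


/-- The key recurrence `2 σ_n = σ_{n+1} + τ_{n+1}`. -/
theorem sigma_rec (t : Fin m → Bool) (n : ℕ) :
    2 * sigmaT t n = sigmaT t (n + 1) + tauT t (n + 1) := by
  classical
  set N := n + 1 with hN
  -- strings of length N whose length-n prefix avoids t
  have key : ∀ s : Fin N → Bool,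
      (∀ i : ℕ, ¬ occursAt t (fun k : Fin n => s (Fin.castLE (Nat.le_succ n) k)) i) ↔
      ((∀ i : ℕ, ¬ occursAt t s i) ∨
        (occursAt t s (N - m) ∧ ∀ i : ℕ, occursAt t s i → i = N - m)) := by
    intro s
    constructor
    · intro hQ
      by_cases hA : ∀ i : ℕ, ¬ occursAt t s i
      · exact Or.inl hA
      · push_neg at hA
        obtain ⟨i, hi⟩ := hA
        have huniq : ∀ j : ℕ, occursAt t s j → j = N - m := by
          intro j hj
          have h1 : j + m ≤ N := hj.1
          have h2 : ¬ (j + m ≤ n) := by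
            intro hle
            exact hQ j ((occursAt_castLE (Nat.le_succ n)).2 ⟨hle, hj⟩)
          omega
        have := huniq i hi
        subst this
        exact Or.inr ⟨hi, huniq⟩
    · rintro (hA | ⟨hocc, huniq⟩) <;> intro i hi
      · exact hA i ((occursAt_castLE (Nat.le_succ n)).1 hi).2
      · obtain ⟨hle, hocc'⟩ := (occursAt_castLE (Nat.le_succ n)).1 hi
        have h1 := huniq i hocc'
        have h2 := hocc.1
        omega
  -- the equivalence with (avoiding strings of length n) × Bool
  have e1 : {s : Fin N → Bool //
      ∀ i : ℕ, ¬ occursAt t (fun k : Fin n => s (Fin.castLE (Nat.le_succ n) k)) i} ≃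
      {s : Fin n → Bool // ∀ i : ℕ, ¬ occursAt t s i} × Bool :=
    { toFun := fun s => (⟨fun k => s.1 (Fin.castLE (Nat.le_succ n) k), s.2⟩, s.1 (Fin.last n))
      invFun := fun p =>
        ⟨fun k => if h : (k : ℕ) < n then p.1.1 ⟨k, h⟩ else p.2, by
          intro i hi
          apply p.1.2 i
          have : (fun k : Fin n =>
              (fun k' : Fin N => if h : (k' : ℕ) < n then p.1.1 ⟨k', h⟩ else p.2)
                (Fin.castLE (Nat.le_succ n) k)) = p.1.1 := by
            funext k
            simp [Fin.castLE, k.isLt]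
          rwa [this] at hi⟩
      left_inv := by
        rintro ⟨s, hs⟩
        ext k
        dsimp
        by_cases h : (k : ℕ) < n
        · rw [if_pos h]
        · rw [if_neg h]
          congr 1
          have : (k : ℕ) = n := by have := k.isLt; omega
          simp [Fin.last, Fin.ext_iff, this]
      right_inv := by
        rintro ⟨⟨p, hp⟩, b⟩
        dsimp
        congr 1
        · ext k
          simp [Fin.castLE, k.isLt]
        · simp [Fin.last] }
  have e2 : {s : Fin N → Bool //
      ∀ i : ℕ, ¬ occursAt t (fun k : Fin n => s (Fin.castLE (Nat.le_succ n) k)) i} ≃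
      ({s : Fin N → Bool // ∀ i : ℕ, ¬ occursAt t s i} ⊕
        {s : Fin N → Bool //
          occursAt t s (N - m) ∧ ∀ i : ℕ, occursAt t s i → i = N - m}) := by
    refine (Equiv.subtypeEquivRight key).trans (subtypeOrEquiv _ _ ?_)
    rw [Pi.disjoint_iff]
    intro s
    rw [Prop.disjoint_iff]
    rintro ⟨hA, hB⟩
    exact hA (N - m) hB.1
  have hc := Nat.card_congr (e1.symm.trans e2)
  rw [Nat.card_prod, Nat.card_sum] at hc
  have : Nat.card Bool = 2 := by simp [Nat.card_eq_fintype_card]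
  rw [this] at hc
  rw [sigmaT, sigmaT, tauT, mul_comm]
  exact hc


/-! ### The correlation recurrence -/

/-- `j` is a correlation of `t`: the first `j` characters agree with the last `j`. -/
def Corr (hm : 0 < m) (t : Fin m → Bool) (j : ℕ) : Prop :=
  ∀ i : Fin m, (i : ℕ) < j → t i = t ⟨(m - j + i) % m, Nat.mod_lt _ hm⟩

instance corrDec (hm : 0 < m) (t : Fin m → Bool) (j : ℕ) : Decidable (Corr hm t j) := by
  unfold Corr; infer_instance

/-- The string `s` followed by the pattern `t`. -/
def app (t : Fin m → Bool) {n : ℕ} (s : Fin n → Bool) : Fin (n + m) → Bool :=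
  fun k => if h : (k : ℕ) < n then s ⟨k, h⟩
    else t ⟨(k : ℕ) - n, by have := k.isLt; omega⟩

theorem app_apply_lt (t : Fin m → Bool) {n : ℕ} (s : Fin n → Bool) (k : ℕ)
    (h2 : k < n + m) (h1 : k < n) : app t s ⟨k, h2⟩ = s ⟨k, h1⟩ := dif_pos h1

theorem app_apply_ge (t : Fin m → Bool) {n : ℕ} (s : Fin n → Bool) (k : ℕ)
    (h2 : k < n + m) (h1 : n ≤ k) (h3 : k - n < m) : app t s ⟨k, h2⟩ = t ⟨k - n, h3⟩ := by
  have h4 : ¬ (k < n) := by omega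
  exact dif_neg h4

theorem app_occ (t : Fin m → Bool) {n : ℕ} (s : Fin n → Bool) :
    occursAt t (app t s) n := by
  apply occursAt_intro le_rfl
  intro k hk
  rw [app_apply_ge t s (n + k) hk (Nat.le_add_right n k) (by have := k.isLt; omega)]
  congr 1
  exact Fin.ext (by simp)

theorem app_restrict (t : Fin m → Bool) {n : ℕ} (s : Fin n → Bool) :
    (fun k : Fin n => app t s (Fin.castLE (Nat.le_add_right n m) k)) = s := by
  funext k
  show app t s ⟨(k : ℕ), _⟩ = s k
  rw [app_apply_lt t s k _ k.isLt]

theorem occursAt_of_agree {n1 n2 : ℕ} {t : Fin m → Bool} {s1 : Fin n1 → Bool}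
    {s2 : Fin n2 → Bool} {i : ℕ} (h1 : i + m ≤ n1)
    (agree : ∀ (k : ℕ) (hk1 : k < n1) (hk2 : k < n2), i ≤ k → k < i + m →
      s1 ⟨k, hk1⟩ = s2 ⟨k, hk2⟩)
    (h : occursAt t s2 i) : occursAt t s1 i := by
  have h2 := h.1
  apply occursAt_intro h1
  intro k hk
  exact (agree (i + k) hk (by have := k.isLt; omega) (by omega)
    (by have := k.isLt; omega)).trans (occursAt_apply h k _)

/-- The position of the first occurrence of `t` in `s ++ t`. -/
def fOcc (t : Fin m → Bool) {n : ℕ} (s : Fin n → Bool) : ℕ :=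
  Nat.find ⟨n, app_occ t s⟩

theorem fOcc_occ (t : Fin m → Bool) {n : ℕ} (s : Fin n → Bool) :
    occursAt t (app t s) (fOcc t s) := Nat.find_spec ⟨n, app_occ t s⟩

theorem fOcc_le (t : Fin m → Bool) {n : ℕ} (s : Fin n → Bool) : fOcc t s ≤ n :=
  Nat.find_min' _ (app_occ t s)

theorem fOcc_min (t : Fin m → Bool) {n : ℕ} (s : Fin n → Bool) {i : ℕ}
    (h : occursAt t (app t s) i) : fOcc t s ≤ i := Nat.find_min' _ h

theorem fOcc_gt (t : Fin m → Bool) {n : ℕ} (s : Fin n → Bool)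
    (hs : ∀ i, ¬ occursAt t s i) : n < fOcc t s + m := by
  by_contra h
  push_neg at h
  apply hs (fOcc t s)
  have hr : occursAt t (fun k : Fin n => app t s (Fin.castLE (Nat.le_add_right n m) k))
      (fOcc t s) := (occursAt_castLE (Nat.le_add_right n m)).2 ⟨h, fOcc_occ t s⟩
  rwa [app_restrict] at hr

theorem corr_fOcc (hm : 0 < m) (t : Fin m → Bool) {n : ℕ} (s : Fin n → Bool)
    (hs : ∀ i, ¬ occursAt t s i) : Corr hm t (fOcc t s + m - n) := by
  set i₀ := fOcc t s with hi₀
  have hle : i₀ ≤ n := fOcc_le t s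
  have hgt : n < i₀ + m := fOcc_gt t s hs
  set j := i₀ + m - n with hj
  intro i hi
  have him : (i : ℕ) < m := i.isLt
  have hjm : j ≤ m := by omega
  have hidx : m - j + (i : ℕ) < m := by omega
  have e1 : app t s ⟨n + i, by omega⟩ = t i := by
    have := occursAt_apply (app_occ t s) i (by omega)
    convert this using 2
  have e2 : app t s ⟨i₀ + (m - j + i), by omega⟩ = t ⟨m - j + i, hidx⟩ := by
    have := occursAt_apply (fOcc_occ t s) ⟨m - j + i, hidx⟩ (by omega)
    convert this using 2
  have e3 : (⟨i₀ + (m - j + i), by omega⟩ : Fin (n + m)) = ⟨n + i, by omega⟩ :=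
    Fin.ext (by simp; omega)
  rw [e3] at e2
  have : t i = t ⟨m - j + i, hidx⟩ := e1.symm.trans e2
  rw [this]
  congr 1
  exact Fin.ext (by simp [Nat.mod_eq_of_lt hidx])


/-- The restriction of `s ++ t` to its first `n + j` characters, where
`j = fOcc + m - n`. -/
def uOf (t : Fin m → Bool) {n : ℕ} (s : Fin n → Bool) :
    Fin (n + (fOcc t s + m - n)) → Bool :=
  fun k => app t s (Fin.castLE (by have := fOcc_le t s; omega) k)

/-- Fiber type: strings of length `n+j` which are `τ`-strings, provided `j` is a
correlation. -/
def Fib (hm : 0 < m) (t : Fin m → Bool) (n j : ℕ) : Type :=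
  {u : Fin (n + j) → Bool // Corr hm t j ∧ occursAt t u ((n + j) - m) ∧
    ∀ i : ℕ, occursAt t u i → i = (n + j) - m}

theorem uOf_tau (hm : 0 < m) (t : Fin m → Bool) {n : ℕ} (s : Fin n → Bool)
    (hs : ∀ i, ¬ occursAt t s i) :
    occursAt t (uOf t s) ((n + (fOcc t s + m - n)) - m) ∧
      ∀ i : ℕ, occursAt t (uOf t s) i → i = (n + (fOcc t s + m - n)) - m := by
  have hle : fOcc t s ≤ n := fOcc_le t s
  have hgt : n < fOcc t s + m := fOcc_gt t s hs
  have hNj : n + (fOcc t s + m - n) - m = fOcc t s := by omega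
  have hb : n + (fOcc t s + m - n) ≤ n + m := by omega
  constructor
  · rw [hNj]
    exact (occursAt_castLE hb).2 ⟨by omega, fOcc_occ t s⟩
  · intro i hi
    obtain ⟨h1, h2⟩ := (occursAt_castLE hb).1 hi
    have h3 := fOcc_min t s h2
    omega

/-- The forward map of the bijection behind the correlation identity. -/
def toSigma (hm : 0 < m) (t : Fin m → Bool) (n : ℕ)
    (s : {s : Fin n → Bool // ∀ i : ℕ, ¬ occursAt t s i}) :
    Σ j : ↥(Finset.Icc 1 m), Fib hm t n j :=
  ⟨⟨fOcc t s.1 + m - n, by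
      have hle : fOcc t s.1 ≤ n := fOcc_le t s.1
      have hgt : n < fOcc t s.1 + m := fOcc_gt t s.1 s.2
      rw [Finset.mem_Icc]; omega⟩,
    ⟨uOf t s.1, corr_fOcc hm t s.1 s.2, uOf_tau hm t s.1 s.2⟩⟩

/-- reading off a raw string from a point of the sigma type -/
def val2 (hm : 0 < m) (t : Fin m → Bool) (n : ℕ)
    (x : Σ j : ↥(Finset.Icc 1 m), Fib hm t n j) : ℕ → Bool :=
  fun k => if hk : k < n + (x.1 : ℕ) then x.2.1 ⟨k, hk⟩ else false

theorem sigma_fib_ext (hm : 0 < m) (t : Fin m → Bool) (n : ℕ)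
    {a b : Σ j : ↥(Finset.Icc 1 m), Fib hm t n j} (h1 : (a.1 : ℕ) = (b.1 : ℕ))
    (h2 : ∀ (k : ℕ) (hk : k < n + (a.1 : ℕ)) (hk' : k < n + (b.1 : ℕ)),
      a.2.1 ⟨k, hk⟩ = b.2.1 ⟨k, hk'⟩) : a = b := by
  obtain ⟨⟨j, hj⟩, u, hu⟩ := a
  obtain ⟨⟨j', hj'⟩, u', hu'⟩ := b
  dsimp at h1 h2
  subst h1
  have : u = u' := funext fun k => by
    have := h2 k k.isLt k.isLt
    simpa using this
  subst this
  rfl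

theorem toSigma_injective (hm : 0 < m) (t : Fin m → Bool) (n : ℕ) :
    Function.Injective (toSigma hm t n) := by
  intro s1 s2 h
  have hval := congrArg (val2 hm t n) h
  apply Subtype.ext
  funext k
  have h1 : val2 hm t n (toSigma hm t n s1) (k : ℕ) = s1.1 k := by
    have hlt : (k : ℕ) < n + (fOcc t s1.1 + m - n) := by
      have := fOcc_gt t s1.1 s1.2; have := k.isLt; omega
    show (if hk : (k : ℕ) < n + (fOcc t s1.1 + m - n)
        then uOf t s1.1 ⟨(k : ℕ), hk⟩ else false) = s1.1 k
    rw [dif_pos hlt]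
    show app t s1.1 ⟨(k : ℕ), _⟩ = s1.1 k
    rw [app_apply_lt t s1.1 k _ k.isLt]
  have h2 : val2 hm t n (toSigma hm t n s2) (k : ℕ) = s2.1 k := by
    have hlt : (k : ℕ) < n + (fOcc t s2.1 + m - n) := by
      have := fOcc_gt t s2.1 s2.2; have := k.isLt; omega
    show (if hk : (k : ℕ) < n + (fOcc t s2.1 + m - n)
        then uOf t s2.1 ⟨(k : ℕ), hk⟩ else false) = s2.1 k
    rw [dif_pos hlt]
    show app t s2.1 ⟨(k : ℕ), _⟩ = s2.1 k
    rw [app_apply_lt t s2.1 k _ k.isLt]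
  rw [← h1, ← h2, hval]


theorem toSigma_surjective (hm : 0 < m) (t : Fin m → Bool) (n : ℕ) :
    Function.Surjective (toSigma hm t n) := by
  rintro ⟨⟨j, hjmem⟩, u, hcorr, hocc, huniq⟩
  have hj := Finset.mem_Icc.1 hjmem
  simp only [show ((⟨j, hjmem⟩ : ↥(Finset.Icc 1 m)) : ℕ) = j from rfl]
    at hcorr hocc huniq
  have hmnj : m ≤ n + j := by have := occursAt_le hocc; omega
  have hs : ∀ i, ¬ occursAt t
      (fun k : Fin n => u (Fin.castLE (Nat.le_add_right n j) k)) i := by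
    intro i hi
    obtain ⟨hle, ho⟩ := (occursAt_castLE (Nat.le_add_right n j)).1 hi
    have := huniq i ho
    omega
  have agree : ∀ (k : ℕ) (hk : k < n + m) (hk' : k < n + j),
      app t (fun k' : Fin n => u (Fin.castLE (Nat.le_add_right n j) k')) ⟨k, hk⟩ =
        u ⟨k, hk'⟩ := by
    intro k hk hk'
    by_cases hkn : k < n
    · rw [app_apply_lt _ _ k _ hkn]
      congr 1
    · have hknm : k - n < m := by omega
      rw [app_apply_ge _ _ k _ (by omega) hknm]
      have hkn' : k - n < j := by omega
      have hi₀ : n + j - m ≤ k := by omega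
      have hr : k - (n + j - m) < m := by omega
      have e1 : u ⟨k, hk'⟩ = t ⟨k - (n + j - m), hr⟩ := by
        have := occursAt_apply hocc ⟨k - (n + j - m), hr⟩
          (by simp only []; omega)
        rw [← this]
        congr 1
        exact Fin.ext (by simp; omega)
      rw [e1]
      have e2 := hcorr ⟨k - n, by omega⟩ hkn'
      simp only [] at e2
      rw [e2]
      congr 1
      apply Fin.ext
      simp only []
      rw [Nat.mod_eq_of_lt (by omega)]
      omega
  have hofirst : occursAt t
      (app t (fun k : Fin n => u (Fin.castLE (Nat.le_add_right n j) k))) (n + j - m) :=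
    occursAt_of_agree (by omega) (fun k hk1 hk2 _ _ => agree k hk1 hk2) hocc
  have hfocc : fOcc t (fun k : Fin n => u (Fin.castLE (Nat.le_add_right n j) k)) =
      n + j - m := by
    have hle1 : fOcc t _ ≤ n + j - m := fOcc_min t _ hofirst
    have hocc' := fOcc_occ t (fun k : Fin n => u (Fin.castLE (Nat.le_add_right n j) k))
    have htrans : occursAt t u
        (fOcc t (fun k : Fin n => u (Fin.castLE (Nat.le_add_right n j) k))) := by
      apply occursAt_of_agree (by omega)
        (fun k hk1 hk2 _ _ => (agree k hk2 hk1).symm) hocc'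
    exact huniq _ htrans
  refine ⟨⟨fun k : Fin n => u (Fin.castLE (Nat.le_add_right n j) k), hs⟩, ?_⟩
  apply sigma_fib_ext
  · show fOcc t (fun k : Fin n => u (Fin.castLE (Nat.le_add_right n j) k)) + m - n = j
    rw [hfocc]; omega
  · intro k hk hk'
    have hk2 : k < n +
        (fOcc t (fun k' : Fin n => u (Fin.castLE (Nat.le_add_right n j) k')) + m - n) := hk
    rw [hfocc] at hk2
    have hb : k < n + m := by omega
    show app t (fun k' : Fin n => u (Fin.castLE (Nat.le_add_right n j) k')) ⟨k, hb⟩ =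
      u ⟨k, hk'⟩
    exact agree k hb hk'


instance fibFintype (hm : 0 < m) (t : Fin m → Bool) (n j : ℕ) :
    Fintype (Fib hm t n j) := by
  unfold Fib
  infer_instance

theorem natcard_fib (hm : 0 < m) (t : Fin m → Bool) (n j : ℕ) :
    Nat.card (Fib hm t n j) = if Corr hm t j then tauT t (n + j) else 0 := by
  by_cases h : Corr hm t j
  · rw [if_pos h, tauT]
    exact Nat.card_congr (Equiv.subtypeEquivRight fun u => by simp [h])
  · rw [if_neg h]
    have : IsEmpty (Fib hm t n j) := ⟨fun u => h u.2.1⟩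
    exact Nat.card_of_isEmpty

/-- The correlation identity: `σ_n = ∑_{j corr} τ_{n+j}`. -/
theorem sigma_eq_sum (hm : 0 < m) (t : Fin m → Bool) (n : ℕ) :
    sigmaT t n = ∑ j ∈ Finset.Icc 1 m, if Corr hm t j then tauT t (n + j) else 0 := by
  have h1 : sigmaT t n = Nat.card (Σ j : ↥(Finset.Icc 1 m), Fib hm t n j) :=
    Nat.card_eq_of_bijective _ ⟨toSigma_injective hm t n, toSigma_surjective hm t n⟩
  rw [h1, Nat.card_eq_fintype_card, Fintype.card_sigma]
  rw [← Finset.sum_coe_sort (Finset.Icc 1 m)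
    (fun j => if Corr hm t j then tauT t (n + j) else 0)]
  apply Finset.sum_congr rfl
  intro j _
  rw [← Nat.card_eq_fintype_card, natcard_fib]

/-- The decay inequality `σ_{n+m} ≤ (2^m - 1) σ_n`. -/
theorem sigma_decay (hm : 0 < m) (t : Fin m → Bool) (n : ℕ) :
    sigmaT t (n + m) ≤ (2 ^ m - 1) * sigmaT t n := by
  have hinj : Function.Injective
      (fun s : {s : Fin (n + m) → Bool // ∀ i : ℕ, ¬ occursAt t s i} =>
        ((⟨fun k : Fin n => s.1 (Fin.castLE (Nat.le_add_right n m) k), fun i hi => by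
            obtain ⟨h1, h2⟩ := (occursAt_castLE (Nat.le_add_right n m)).1 hi
            exact s.2 i h2⟩ :
          {s : Fin n → Bool // ∀ i : ℕ, ¬ occursAt t s i}),
          (⟨fun k : Fin m => s.1 ⟨n + k, by have := k.isLt; omega⟩, by
            intro h
            apply s.2 n
            apply occursAt_intro (le_refl (n + m))
            intro k hk
            have := congrFun h k
            simpa using this⟩ :
          {v : Fin m → Bool // v ≠ t}))) := by
    rintro ⟨s1, hs1⟩ ⟨s2, hs2⟩ h
    simp only [Prod.mk.injEq, Subtype.mk.injEq] at h
    apply Subtype.ext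
    funext k
    rcases Nat.lt_or_ge (k : ℕ) n with hk | hk
    · have := congrFun h.1 ⟨(k : ℕ), hk⟩
      simpa [Fin.castLE] using this
    · have hk2 : (k : ℕ) - n < m := by have := k.isLt; omega
      have := congrFun h.2 ⟨(k : ℕ) - n, hk2⟩
      simp only [] at this
      have e : (⟨n + ((k : ℕ) - n), by omega⟩ : Fin (n + m)) = k :=
        Fin.ext (by simp; omega)
      rwa [e] at this
  have hcard := Nat.card_le_card_of_injective _ hinj
  rw [Nat.card_prod] at hcard
  have h2 : Nat.card {v : Fin m → Bool // v ≠ t} = 2 ^ m - 1 := by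
    rw [Nat.card_eq_fintype_card]
    rw [Fintype.card_subtype_compl]
    simp [Fintype.card_subtype_eq]
  rw [h2] at hcard
  rw [sigmaT, sigmaT]
  calc Nat.card {s : Fin (n + m) → Bool // ∀ i : ℕ, ¬ occursAt t s i}
      ≤ Nat.card {s : Fin n → Bool // ∀ i : ℕ, ¬ occursAt t s i} * (2 ^ m - 1) := hcard
    _ = (2 ^ m - 1) * Nat.card {s : Fin n → Bool // ∀ i : ℕ, ¬ occursAt t s i} :=
        mul_comm _ _


/-! ### Analysis -/

open Filter Finset

/-- `aR t n = σ_n / 2^n`, the probability of avoiding `t` for `n` tosses. -/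
noncomputable def aR (t : Fin m → Bool) (n : ℕ) : ℝ := (sigmaT t n : ℝ) / 2 ^ n

/-- `bR t n = τ_n / 2^n`, the probability that `t` first completes at toss `n`. -/
noncomputable def bR (t : Fin m → Bool) (n : ℕ) : ℝ := (tauT t n : ℝ) / 2 ^ n

theorem aR_nonneg (t : Fin m → Bool) (n : ℕ) : 0 ≤ aR t n :=
  div_nonneg (Nat.cast_nonneg _) (by positivity)

theorem bR_nonneg (t : Fin m → Bool) (n : ℕ) : 0 ≤ bR t n :=
  div_nonneg (Nat.cast_nonneg _) (by positivity)

theorem aR_rec (t : Fin m → Bool) (n : ℕ) : aR t n = aR t (n + 1) + bR t (n + 1) := by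
  have h := sigma_rec t n
  have h2 : (2 * sigmaT t n : ℝ) = (sigmaT t (n + 1) : ℝ) + (tauT t (n + 1) : ℝ) := by
    exact_mod_cast congrArg (fun x : ℕ => (x : ℝ)) h
  rw [aR, aR, bR, pow_succ]
  have h2pow : (0:ℝ) < 2 ^ n := by positivity
  field_simp
  rw [← h2]
  ring

theorem aR_zero (hm : 0 < m) (t : Fin m → Bool) : aR t 0 = 1 := by
  rw [aR, sigmaT_zero hm t]; simp

theorem bR_eq_zero (hm : 0 < m) (t : Fin m → Bool) {n : ℕ} (hn : n < m) : bR t n = 0 := by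
  rw [bR, tauT_eq_zero hm t hn]; simp

theorem aR_antitone (t : Fin m → Bool) : Antitone (aR t) := by
  apply antitone_nat_of_succ_le
  intro n
  rw [aR_rec t n]
  have := bR_nonneg t (n + 1)
  linarith

theorem aR_le_one (hm : 0 < m) (t : Fin m → Bool) (n : ℕ) : aR t n ≤ 1 := by
  have := aR_antitone t (Nat.zero_le n)
  rwa [aR_zero hm t] at this

theorem aR_decay (hm : 0 < m) (t : Fin m → Bool) (n : ℕ) :
    aR t (n + m) ≤ (1 - (1 / 2) ^ m) * aR t n := by
  have h := sigma_decay hm t n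
  have h1 : (1:ℕ) ≤ 2 ^ m := Nat.one_le_two_pow
  have h2 : (sigmaT t (n + m) : ℝ) ≤ ((2:ℝ) ^ m - 1) * (sigmaT t n : ℝ) := by
    have h3 := (Nat.cast_le (α := ℝ)).2 h
    rwa [Nat.cast_mul, Nat.cast_sub h1, Nat.cast_pow, Nat.cast_ofNat, Nat.cast_one] at h3
  rw [aR, aR]
  rw [div_le_iff₀ (by positivity)]
  have e : (1 - (1 / 2 : ℝ) ^ m) * ((sigmaT t n : ℝ) / 2 ^ n) * 2 ^ (n + m) =
      ((2:ℝ) ^ m - 1) * (sigmaT t n : ℝ) := by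
    have h2n : (2:ℝ) ^ n ≠ 0 := by positivity
    have h2m : (2:ℝ) ^ m ≠ 0 := by positivity
    rw [pow_add]
    field_simp
    ring_nf
    simp
  rw [e]
  exact h2

theorem aR_le_pow (hm : 0 < m) (t : Fin m → Bool) :
    ∀ (k n : ℕ), m * k ≤ n → aR t n ≤ (1 - (1 / 2) ^ m) ^ k := by
  intro k
  induction k with
  | zero => intro n _; simpa using aR_le_one hm t n
  | succ k ih =>
    intro n hn
    have h1 : aR t n ≤ aR t (m * k + m) := aR_antitone t (by rw [Nat.mul_succ] at hn; omega)
    have h2 : aR t (m * k + m) ≤ (1 - (1 / 2) ^ m) * aR t (m * k) := aR_decay hm t (m * k)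
    have h3 : aR t (m * k) ≤ (1 - (1 / 2) ^ m) ^ k := ih (m * k) le_rfl
    have hr0 : (0:ℝ) ≤ 1 - (1 / 2) ^ m := by
      have : (1 / 2 : ℝ) ^ m ≤ 1 ^ m := pow_le_pow_left₀ (by norm_num) (by norm_num) m
      simpa using this
    calc aR t n ≤ (1 - (1 / 2) ^ m) * aR t (m * k) := h1.trans h2
      _ ≤ (1 - (1 / 2) ^ m) * (1 - (1 / 2) ^ m) ^ k :=
          mul_le_mul_of_nonneg_left h3 hr0
      _ = (1 - (1 / 2) ^ m) ^ (k + 1) := by ring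

theorem aR_tendsto (hm : 0 < m) (t : Fin m → Bool) :
    Tendsto (aR t) atTop (nhds 0) := by
  have hr0 : (0:ℝ) ≤ 1 - (1 / 2) ^ m := by
    have : (1 / 2 : ℝ) ^ m ≤ 1 ^ m := pow_le_pow_left₀ (by norm_num) (by norm_num) m
    simpa using this
  have hr1 : (1 - (1 / 2 : ℝ) ^ m) < 1 := by
    have : (0:ℝ) < (1 / 2) ^ m := by positivity
    linarith
  have hdiv : Tendsto (fun n : ℕ => n / m) atTop atTop := by
    apply tendsto_atTop_atTop.2
    intro C
    exact ⟨m * C, fun n hn => (Nat.le_div_iff_mul_le hm).2 (by rw [mul_comm]; omega)⟩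
  have hpow : Tendsto (fun n : ℕ => (1 - (1 / 2 : ℝ) ^ m) ^ (n / m)) atTop (nhds 0) :=
    (tendsto_pow_atTop_nhds_zero_of_lt_one hr0 hr1).comp hdiv
  apply tendsto_of_tendsto_of_tendsto_of_le_of_le tendsto_const_nhds hpow
  · exact fun n => aR_nonneg t n
  · intro n
    exact aR_le_pow hm t (n / m) n (by rw [mul_comm]; exact Nat.div_mul_le_self n m)


theorem aR_partial (hm : 0 < m) (t : Fin m → Bool) (n : ℕ) :
    ∀ N, n ≤ N →
      aR t n = aR t N + ∑ k ∈ Finset.range (N + 1), (if n < k then bR t k else 0) := by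
  intro N
  induction N with
  | zero =>
    intro h
    have hn : n = 0 := Nat.le_zero.1 h
    subst hn
    simp
  | succ N ih =>
    intro h
    rcases Nat.lt_or_ge N n with h1 | h1
    · have hn : n = N + 1 := by omega
      subst hn
      rw [Finset.sum_eq_zero, add_zero]
      intro k hk
      rw [if_neg]
      simp only [Finset.mem_range] at hk
      omega
    · rw [Finset.sum_range_succ, if_pos (by omega)]
      have h2 := ih h1
      rw [aR_rec t N] at h2
      linarith

theorem hasSum_tail (hm : 0 < m) (t : Fin m → Bool) (n : ℕ) :
    HasSum (fun j => if n < j then bR t j else 0) (aR t n) := by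
  set F : ℕ → ℝ := fun j => if n < j then bR t j else 0 with hF
  have hnonneg : ∀ j, 0 ≤ F j := by
    intro j
    rw [hF]
    dsimp only
    split
    · exact bR_nonneg t j
    · exact le_refl 0
  have hbound : ∀ N, ∑ k ∈ Finset.range N, F k ≤ aR t n := by
    intro N
    have hsub : ∑ k ∈ Finset.range N, F k ≤ ∑ k ∈ Finset.range (N + n + 1), F k :=
      Finset.sum_le_sum_of_subset_of_nonneg
        (Finset.range_subset_range.2 (by omega)) (fun k _ _ => hnonneg k)
    have hid := aR_partial hm t n (N + n) (by omega)
    have := aR_nonneg t (N + n)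
    linarith
  have hsummable : Summable F := summable_of_sum_range_le hnonneg hbound
  rw [hsummable.hasSum_iff]
  have ht1 : Tendsto (fun N => ∑ k ∈ Finset.range (N + 1), F k) atTop
      (nhds (∑' j, F j)) :=
    hsummable.hasSum.tendsto_sum_nat.comp (tendsto_add_atTop_nat 1)
  have ht2 : Tendsto (fun N => aR t n - aR t N) atTop (nhds (aR t n)) := by
    have := (tendsto_const_nhds (x := aR t n) (f := atTop)).sub (aR_tendsto hm t)
    simpa using this
  have hev : (fun N => aR t n - aR t N) =ᶠ[atTop]
      (fun N => ∑ k ∈ Finset.range (N + 1), F k) := by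
    filter_upwards [eventually_ge_atTop n] with N hN
    have := aR_partial hm t n N hN
    linarith
  exact (tendsto_nhds_unique (ht2.congr' hev) ht1).symm

theorem hasSum_bR (hm : 0 < m) (t : Fin m → Bool) : HasSum (bR t) 1 := by
  have h0 := hasSum_tail hm t 0
  have he : (fun j => if 0 < j then bR t j else 0) = bR t := by
    funext j
    rcases Nat.eq_zero_or_pos j with hj | hj
    · subst hj
      rw [if_neg (by omega), bR_eq_zero hm t hm]
    · rw [if_pos hj]
  rwa [he, aR_zero hm t] at h0

theorem aR_corr (hm : 0 < m) (t : Fin m → Bool) (n : ℕ) :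
    aR t n = ∑ j ∈ Finset.Icc 1 m,
      (if Corr hm t j then (2:ℝ) ^ j * bR t (n + j) else 0) := by
  rw [aR, sigma_eq_sum hm t n]
  push_cast
  rw [Finset.sum_div]
  apply Finset.sum_congr rfl
  intro j _
  by_cases h : Corr hm t j
  · rw [if_pos h, if_pos h, bR, pow_add]
    have h1 : (2:ℝ) ^ n ≠ 0 := by positivity
    have h2 : (2:ℝ) ^ j ≠ 0 := by positivity
    field_simp
  · rw [if_neg h, if_neg h, zero_div]

theorem sum_bR_shift (hm : 0 < m) (t : Fin m → Bool) {j : ℕ} (hj : j ∈ Finset.Icc 1 m)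
    (N : ℕ) :
    ∑ n ∈ Finset.range N, bR t (n + j) = ∑ k ∈ Finset.range (j + N), bR t k := by
  rw [Finset.sum_range_add]
  have h0 : ∑ x ∈ Finset.range j, bR t x = 0 := by
    apply Finset.sum_eq_zero
    intro k hk
    simp only [Finset.mem_range] at hk
    have hjm := Finset.mem_Icc.1 hj
    exact bR_eq_zero hm t (by omega)
  rw [h0, zero_add]
  apply Finset.sum_congr rfl
  intro n _
  rw [add_comm]

theorem tendsto_sum_bR_shift (hm : 0 < m) (t : Fin m → Bool) {j : ℕ}
    (hj : j ∈ Finset.Icc 1 m) :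
    Tendsto (fun N => ∑ n ∈ Finset.range N, bR t (n + j)) atTop (nhds 1) := by
  have h1 : Tendsto (fun N => ∑ k ∈ Finset.range (j + N), bR t k) atTop (nhds 1) := by
    apply (hasSum_bR hm t).tendsto_sum_nat.comp
    simpa [add_comm] using tendsto_add_atTop_nat j
  exact h1.congr (fun N => (sum_bR_shift hm t hj N).symm)

theorem sum_bR_le_one (hm : 0 < m) (t : Fin m → Bool) {j : ℕ} (hj : j ∈ Finset.Icc 1 m)
    (N : ℕ) : ∑ n ∈ Finset.range N, bR t (n + j) ≤ 1 := by
  rw [sum_bR_shift hm t hj N]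
  have := Summable.sum_le_tsum (Finset.range (j + N)) (fun k _ => bR_nonneg t k)
    (hasSum_bR hm t).summable
  rwa [(hasSum_bR hm t).tsum_eq] at this

theorem aR_partial_corr (hm : 0 < m) (t : Fin m → Bool) (N : ℕ) :
    ∑ n ∈ Finset.range N, aR t n = ∑ j ∈ Finset.Icc 1 m,
      (if Corr hm t j then (2:ℝ) ^ j * ∑ n ∈ Finset.range N, bR t (n + j) else 0) := by
  have h1 : ∀ n ∈ Finset.range N, aR t n = ∑ j ∈ Finset.Icc 1 m,
      (if Corr hm t j then (2:ℝ) ^ j * bR t (n + j) else 0) :=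
    fun n _ => aR_corr hm t n
  rw [Finset.sum_congr rfl h1, Finset.sum_comm]
  apply Finset.sum_congr rfl
  intro j _
  by_cases h : Corr hm t j
  · simp only [if_pos h, Finset.mul_sum]
  · simp only [if_neg h, Finset.sum_const_zero]

theorem hasSum_aR (hm : 0 < m) (t : Fin m → Bool) :
    HasSum (aR t) (∑ j ∈ Finset.Icc 1 m, if Corr hm t j then (2:ℝ) ^ j else 0) := by
  set R := ∑ j ∈ Finset.Icc 1 m, if Corr hm t j then (2:ℝ) ^ j else 0 with hR
  have hbound : ∀ N, ∑ n ∈ Finset.range N, aR t n ≤ R := by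
    intro N
    rw [aR_partial_corr hm t N, hR]
    apply Finset.sum_le_sum
    intro j hj
    by_cases h : Corr hm t j
    · rw [if_pos h, if_pos h]
      have h1 := sum_bR_le_one hm t hj N
      have h2 : (0:ℝ) ≤ 2 ^ j := by positivity
      nlinarith
    · rw [if_neg h, if_neg h]
  have hsummable : Summable (aR t) :=
    summable_of_sum_range_le (aR_nonneg t) hbound
  rw [hsummable.hasSum_iff]
  have ht1 : Tendsto (fun N => ∑ n ∈ Finset.range N, aR t n) atTop
      (nhds (∑' n, aR t n)) := hsummable.hasSum.tendsto_sum_nat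
  have ht2 : Tendsto (fun N => ∑ n ∈ Finset.range N, aR t n) atTop (nhds R) := by
    have he : (fun N => ∑ n ∈ Finset.range N, aR t n) = fun N => ∑ j ∈ Finset.Icc 1 m,
        (if Corr hm t j then (2:ℝ) ^ j * ∑ n ∈ Finset.range N, bR t (n + j) else 0) :=
      funext fun N => aR_partial_corr hm t N
    rw [he, hR]
    apply tendsto_finset_sum
    intro j hj
    by_cases h : Corr hm t j
    · simp only [if_pos h]
      have := (tendsto_sum_bR_shift hm t hj).const_mul ((2:ℝ) ^ j)
      simpa using this
    · simp only [if_neg h]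
      exact tendsto_const_nhds
  exact tendsto_nhds_unique ht1 ht2

theorem tsum_main (hm : 0 < m) (t : Fin m → Bool) :
    ∑' j : ℕ, (j : ℝ) * (tauT t j : ℝ) / 2 ^ j =
      ∑ j ∈ Finset.Icc 1 m, if Corr hm t j then (2:ℝ) ^ j else 0 := by
  set F : ℕ → ℕ → ℝ := fun n j => if n < j then bR t j else 0 with hF
  have hrow : ∀ n, HasSum (F n) (aR t n) := fun n => hasSum_tail hm t n
  have hcol : ∀ j, Summable fun n => F n j := by
    intro j
    apply summable_of_ne_finset_zero (s := Finset.range j)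
    intro n hn
    simp only [Finset.mem_range, not_lt] at hn
    rw [hF]
    exact if_neg (by omega)
  have hrowsum : (fun n => ∑' j, F n j) = aR t :=
    funext fun n => (hrow n).tsum_eq
  have huncurry : Summable (Function.uncurry F) := by
    apply (summable_prod_of_nonneg ?_).2
    · constructor
      · exact fun n => (hrow n).summable
      · rw [show (fun n => ∑' j, Function.uncurry F (n, j)) = fun n => ∑' j, F n j from rfl,
          hrowsum]
        exact (hasSum_aR hm t).summable
    · intro p
      rw [hF]
      dsimp only [Function.uncurry]
      split
      · exact bR_nonneg t _
      · exact le_refl 0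
  have hswap := Summable.tsum_comm' huncurry (fun n => (hrow n).summable) hcol
  have hinner : ∀ j : ℕ, ∑' n, F n j = (j : ℝ) * bR t j := by
    intro j
    rw [tsum_eq_sum (s := Finset.range j) (fun n hn => by
      simp only [Finset.mem_range, not_lt] at hn
      rw [hF]; exact if_neg (by omega))]
    rw [Finset.sum_congr rfl (fun n hn => if_pos (Finset.mem_range.1 hn))]
    rw [Finset.sum_const, Finset.card_range, nsmul_eq_mul]
  calc ∑' j : ℕ, (j : ℝ) * (tauT t j : ℝ) / 2 ^ j
      = ∑' j : ℕ, (j : ℝ) * bR t j := by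
        apply tsum_congr
        intro j
        rw [bR, mul_div_assoc]
    _ = ∑' (j) (n), F n j := by
        apply tsum_congr
        intro j
        rw [hinner j]
    _ = ∑' (n) (j), F n j := hswap
    _ = ∑' n, aR t n := by
        apply tsum_congr
        intro n
        rw [(hrow n).tsum_eq]
    _ = _ := (hasSum_aR hm t).tsum_eq

theorem corr_self (hm : 0 < m) (t : Fin m → Bool) : Corr hm t m := by
  intro i hi
  have he : (⟨(m - m + i) % m, Nat.mod_lt _ hm⟩ : Fin m) = i :=
    Fin.ext (by simp [Nat.mod_eq_of_lt i.isLt])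
  rw [he]

theorem geom_sum_Icc (M : ℕ) : ∑ j ∈ Finset.Icc 1 M, (2:ℝ) ^ j = 2 ^ (M + 1) - 2 := by
  induction M with
  | zero => simp
  | succ M ih =>
    rw [Finset.sum_Icc_succ_top (by omega), ih]
    ring


end ConwayAux

open ConwayAux

/-- Conway's leading-number formula: for any nonempty binary pattern `T` of
length `m`, the expected waiting time `N_T = ∑_{j≥m} j·τ_j/2^j` equals
`∑_{j=1}^m c_j 2^j`, where `c_j = 1` iff the first `j` characters of `T`
coincide with its last `j` characters (a self-overlap); in particular `c_m = 1`.
Consequently `N_T` is an even integer with `2^m ≤ N_T ≤ 2^{m+1} - 2`. -/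
theorem conway_leading_number {m : ℕ} (hm : 0 < m) (t : Fin m → Bool) :
    (∑' j : ℕ, (j : ℝ) * (tauT t j : ℝ) / 2 ^ j =
        ∑ j ∈ Finset.Icc 1 m,
          if ∀ i : Fin m, (i : ℕ) < j →
              t i = t ⟨(m - j + i) % m, Nat.mod_lt _ hm⟩
          then (2 : ℝ) ^ j else 0) ∧
      (∀ i : Fin m, (i : ℕ) < m → t i = t ⟨(m - m + i) % m, Nat.mod_lt _ hm⟩) ∧
      (∃ k : ℕ, ∑' j : ℕ, (j : ℝ) * (tauT t j : ℝ) / 2 ^ j = 2 * k) ∧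
      (2 : ℝ) ^ m ≤ ∑' j : ℕ, (j : ℝ) * (tauT t j : ℝ) / 2 ^ j ∧
      ∑' j : ℕ, (j : ℝ) * (tauT t j : ℝ) / 2 ^ j ≤ 2 ^ (m + 1) - 2 := by
  have hsum : ∑ j ∈ Finset.Icc 1 m,
      (if ∀ i : Fin m, (i : ℕ) < j →
          t i = t ⟨(m - j + i) % m, Nat.mod_lt _ hm⟩
        then (2 : ℝ) ^ j else 0) =
      ∑ j ∈ Finset.Icc 1 m, (if Corr hm t j then (2:ℝ) ^ j else 0) := by
    apply Finset.sum_congr rfl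
    intro j _
    exact if_congr Iff.rfl rfl rfl
  have h1 : ∑' j : ℕ, (j : ℝ) * (tauT t j : ℝ) / 2 ^ j =
      ∑ j ∈ Finset.Icc 1 m,
        (if ∀ i : Fin m, (i : ℕ) < j →
            t i = t ⟨(m - j + i) % m, Nat.mod_lt _ hm⟩
          then (2 : ℝ) ^ j else 0) := by
    rw [hsum]
    exact tsum_main hm t
  refine ⟨h1, corr_self hm t, ?_, ?_, ?_⟩
  · refine ⟨∑ j ∈ Finset.Icc 1 m, (if Corr hm t j then 2 ^ (j - 1) else 0), ?_⟩
    rw [h1, hsum]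
    push_cast
    rw [Finset.mul_sum]
    apply Finset.sum_congr rfl
    intro j hj
    have hj1 := (Finset.mem_Icc.1 hj).1
    by_cases h : Corr hm t j
    · rw [if_pos h, if_pos h]
      have he : (2:ℝ) ^ j = 2 * 2 ^ (j - 1) := by
        rw [← pow_succ']
        congr 1
        omega
      rw [he]
    · rw [if_neg h, if_neg h, mul_zero]
  · rw [h1, hsum]
    have hmem : m ∈ Finset.Icc 1 m := Finset.mem_Icc.2 ⟨hm, le_rfl⟩
    have hterm : (if Corr hm t m then (2:ℝ) ^ m else 0) = 2 ^ m :=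
      if_pos (corr_self hm t)
    calc (2:ℝ) ^ m = (if Corr hm t m then (2:ℝ) ^ m else 0) := hterm.symm
      _ ≤ ∑ j ∈ Finset.Icc 1 m, (if Corr hm t j then (2:ℝ) ^ j else 0) :=
        Finset.single_le_sum (f := fun j => if Corr hm t j then (2:ℝ) ^ j else 0)
          (fun j _ => by positivity) hmem
  · rw [h1, hsum]
    calc ∑ j ∈ Finset.Icc 1 m, (if Corr hm t j then (2:ℝ) ^ j else 0)
        ≤ ∑ j ∈ Finset.Icc 1 m, (2:ℝ) ^ j := by
          apply Finset.sum_le_sum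
          intro j _
          split
          · exact le_refl _
          · positivity
      _ = 2 ^ (m + 1) - 2 := geom_sum_Icc m
end
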